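/- Suppose Eᵢ = 0 for every i = 1,…,N and Vᵢ > 0 for every i. Let Î_J be the joint estimator computed with R_J ≥ 1 replications and Î_M the marginal estimator computed with R_M ≥ 1 replications. Then Var(Î_J) = Var(Î_M) if and only if R_J = R_M^N. -/

import Mathlib

open MeasureTheory ProbabilityTheory Finset

/-!
With zero means, the variance of a product of independent variables is the product of their
variances, and averaging `R` pairwise independent variables of variance `v` gives variance `v / R`.
The products `∏ i, Y i r` over different replications `r`, and the averages `R⁻¹ * ∑ r, Y i r`
over different indices `i`, depend on disjoint blocks of the independent family, hence are
independent. So `Var Î_J = (∏ i, V i) / R_J` and `Var Î_M = ∏ i, V i / R_M = (∏ i, V i) / R_M ^ N`,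
and `∏ i, V i > 0`.
-/

namespace ProbabilityTheory

variable {Ω : Type*} {mΩ : MeasurableSpace Ω} {μ : Measure Ω}

lemma iIndepFun.curry {ι κ 𝓧 : Type*} [MeasurableSpace 𝓧] [Countable ι] [Countable κ]
    {X : ι → κ → Ω → 𝓧} (hX : ∀ i j, AEMeasurable (X i j) μ)
    (h : iIndepFun (fun p : ι × κ ↦ X p.1 p.2) μ) :
    iIndepFun (fun i ω j ↦ X i j ω) μ := by
  have := h.isProbabilityMeasure
  have _ i j := Measure.isProbabilityMeasure_map (hX i j)
  have hXp : AEMeasurable (fun ω (p : ι × κ) ↦ X p.1 p.2 ω) μ :=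
    aemeasurable_pi_iff.2 fun p ↦ hX p.1 p.2
  rw [iIndepFun_iff_map_fun_eq_infinitePi_map₀
    (aemeasurable_pi_iff.2 fun i ↦ aemeasurable_pi_iff.2 (hX i))]
  change μ.map (MeasurableEquiv.curry ι κ 𝓧 ∘ fun ω p ↦ X p.1 p.2 ω) = _
  rw [← AEMeasurable.map_map_of_aemeasurable (by fun_prop) hXp, h.map_fun_eq_infinitePi_map₀ hXp,
    Measure.infinitePi_map_curry (fun i j ↦ μ.map (X i j))]
  congr with i : 1
  exact ((h.precomp (Prod.mk_right_injective i)).map_fun_eq_infinitePi_map₀' (hX i)).symm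

variable {ι : Type*} {X : ι → Ω → ℝ}

lemma iIndepFun.integrable_finsetProd (h : iIndepFun X μ) (hX : ∀ i, Integrable (X i) μ)
    (s : Finset ι) : Integrable (∏ i ∈ s, X i) μ := by
  have := h.isProbabilityMeasure
  induction s using Finset.cons_induction with
  | empty => exact integrable_const 1
  | cons j s hj ih =>
    rw [prod_cons]
    exact (h.indepFun_finsetProd_of_notMem₀ (fun i ↦ (hX i).aemeasurable) hj).symm.integrable_mul
      (hX j) ih

lemma iIndepFun.sq (h : iIndepFun X μ) : iIndepFun (fun i ω ↦ X i ω ^ 2) μ :=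
  h.comp (fun _ x ↦ x ^ 2) fun _ ↦ by fun_prop

variable [Fintype ι]

lemma iIndepFun.memLp_two_prod (h : iIndepFun X μ) (hX : ∀ i, MemLp (X i) 2 μ) :
    MemLp (fun ω ↦ ∏ i, X i ω) 2 μ := by
  refine (memLp_two_iff_integrable_sq
    (aestronglyMeasurable_fun_prod _ fun i _ ↦ (hX i).aestronglyMeasurable)).2 ?_
  simp_rw [← prod_pow]
  simpa only [prod_fn] using h.sq.integrable_finsetProd (fun i ↦ (hX i).integrable_sq) univ

lemma iIndepFun.integral_prod_eq_zero [Nonempty ι] (h : iIndepFun X μ)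
    (hX : ∀ i, AEStronglyMeasurable (X i) μ) (hmean : ∀ i, μ[X i] = 0) :
    ∫ ω, ∏ i, X i ω ∂μ = 0 := by
  rw [h.integral_fun_prod_eq_prod_integral hX]
  exact prod_eq_zero (mem_univ (Classical.arbitrary ι)) (hmean _)

lemma iIndepFun.variance_prod [Nonempty ι] (h : iIndepFun X μ) (hX : ∀ i, MemLp (X i) 2 μ)
    (hmean : ∀ i, μ[X i] = 0) :
    variance (fun ω ↦ ∏ i, X i ω) μ = ∏ i, variance (X i) μ := by
  have hXm i := (hX i).aestronglyMeasurable
  rw [variance_of_integral_eq_zero (h.memLp_two_prod hX).aestronglyMeasurable.aemeasurable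
    (h.integral_prod_eq_zero hXm hmean)]
  simp_rw [← prod_pow]
  rw [h.sq.integral_fun_prod_eq_prod_integral fun i ↦ (hXm i).pow 2]
  exact prod_congr rfl fun i _ ↦
    (variance_of_integral_eq_zero (hXm i).aemeasurable (hmean i)).symm

lemma variance_average {κ : Type*} [Fintype κ] {Z : κ → Ω → ℝ} (hZ : ∀ r, MemLp (Z r) 2 μ)
    (hindep : Pairwise fun r s ↦ IndepFun (Z r) (Z s) μ) {v : ℝ}
    (hv : ∀ r, variance (Z r) μ = v) :
    variance (fun ω ↦ (Fintype.card κ : ℝ)⁻¹ * ∑ r, Z r ω) μ = v / Fintype.card κ := by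
  have hsum := IndepFun.variance_sum (s := univ) (fun r _ ↦ hZ r) fun r _ s _ hrs ↦ hindep hrs
  rw [variance_const_mul, ← sum_fn, hsum]
  simp only [hv, sum_const, card_univ, nsmul_eq_mul]
  rcases eq_or_ne (Fintype.card κ : ℝ) 0 with hn | hn
  · simp [hn]
  · field_simp

variable [Nonempty ι] {κ : Type*} [Fintype κ] {Y : ι → κ → Ω → ℝ}

lemma iIndepFun.variance_joint_estimator (h : iIndepFun (fun p : ι × κ ↦ Y p.1 p.2) μ)
    (hY : ∀ i r, MemLp (Y i r) 2 μ) (hmean : ∀ i r, μ[Y i r] = 0) {v : ι → ℝ}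
    (hv : ∀ i r, variance (Y i r) μ = v i) :
    variance (fun ω ↦ (Fintype.card κ : ℝ)⁻¹ * ∑ r, ∏ i, Y i r ω) μ
      = (∏ i, v i) / Fintype.card κ := by
  have hcol (r : κ) : iIndepFun (fun i ↦ Y i r) μ := h.precomp (Prod.mk_left_injective r)
  refine variance_average (fun r ↦ (hcol r).memLp_two_prod fun i ↦ hY i r) ?_ fun r ↦ ?_
  · have hswap : iIndepFun (fun p : κ × ι ↦ Y p.2 p.1) μ := h.precomp Prod.swap_injective
    intro r s hrs
    exact ((hswap.curry fun r i ↦ (hY i r).aestronglyMeasurable.aemeasurable).comp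
      (fun _ y ↦ ∏ i, y i) fun _ ↦ by fun_prop).indepFun hrs
  · rw [(hcol r).variance_prod (fun i ↦ hY i r) fun i ↦ hmean i r]
    exact prod_congr rfl fun i _ ↦ hv i r

lemma iIndepFun.variance_marginal_estimator (h : iIndepFun (fun p : ι × κ ↦ Y p.1 p.2) μ)
    (hY : ∀ i r, MemLp (Y i r) 2 μ) (hmean : ∀ i r, μ[Y i r] = 0) {v : ι → ℝ}
    (hv : ∀ i r, variance (Y i r) μ = v i) :
    variance (fun ω ↦ ∏ i, (Fintype.card κ : ℝ)⁻¹ * ∑ r, Y i r ω) μ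
      = (∏ i, v i) / (Fintype.card κ : ℝ) ^ Fintype.card ι := by
  have := h.isProbabilityMeasure
  set n := (Fintype.card κ : ℝ)
  have hrow : iIndepFun (fun i ω ↦ n⁻¹ * ∑ r, Y i r ω) μ :=
    (h.curry fun i r ↦ (hY i r).aestronglyMeasurable.aemeasurable).comp
      (fun _ y ↦ n⁻¹ * ∑ r, y r) fun _ ↦ by fun_prop
  have hL2 (i : ι) : MemLp (fun ω ↦ n⁻¹ * ∑ r, Y i r ω) 2 μ := by
    simpa only [sum_fn] using (memLp_finsetSum' univ fun r _ ↦ hY i r).const_mul n⁻¹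
  have hmean' (i : ι) : μ[fun ω ↦ n⁻¹ * ∑ r, Y i r ω] = 0 := by
    rw [integral_const_mul, integral_finsetSum _ fun r _ ↦ (hY i r).integrable one_le_two]
    simp [hmean]
  have hrowvar (i : ι) : variance (fun ω ↦ n⁻¹ * ∑ r, Y i r ω) μ = v i / n :=
    variance_average (hY i)
      (fun r s hrs ↦ h.indepFun (show ((i, r) : ι × κ) ≠ (i, s) by simpa using hrs)) (hv i)
  rw [hrow.variance_prod hL2 hmean', prod_congr rfl fun i _ ↦ hrowvar i, prod_div_distrib,
    prod_const, card_univ]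

end ProbabilityTheory

theorem variance_joint_eq_marginal_iff_zero_means_general
    {Ω : Type*} [MeasurableSpace Ω] (μ : Measure Ω) [IsProbabilityMeasure μ]
    (N RJ RM : ℕ) (hN : 1 ≤ N)
    (X : Fin N → Ω → ℝ)
    (hXL2 : ∀ i, MemLp (X i) 2 μ)
    (YJ : Fin N → Fin RJ → Ω → ℝ)
    (hYJindep : iIndepFun (m := fun _ => Real.measurableSpace)
      (fun p : Fin N × Fin RJ => YJ p.1 p.2) μ)
    (hYJdist : ∀ i r, IdentDistrib (YJ i r) (X i) μ μ)
    (YM : Fin N → Fin RM → Ω → ℝ)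
    (hYMindep : iIndepFun (m := fun _ => Real.measurableSpace)
      (fun p : Fin N × Fin RM => YM p.1 p.2) μ)
    (hYMdist : ∀ i r, IdentDistrib (YM i r) (X i) μ μ)
    (hE : ∀ i, (∫ ω, X i ω ∂μ) = 0)
    (hV : ∀ i, 0 < variance (X i) μ) :
    variance (fun ω => (RJ : ℝ)⁻¹ * ∑ r, ∏ i, YJ i r ω) μ
      = variance (fun ω => ∏ i, ((RM : ℝ)⁻¹ * ∑ r, YM i r ω)) μ
    ↔ RJ = RM ^ N := by
  have : Nonempty (Fin N) := ⟨⟨0, hN⟩⟩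
  have hJ := hYJindep.variance_joint_estimator (fun i r ↦ (hYJdist i r).symm.memLp_snd (hXL2 i))
    (fun i r ↦ (hYJdist i r).integral_eq.trans (hE i)) fun i r ↦ (hYJdist i r).variance_eq
  have hM := hYMindep.variance_marginal_estimator (fun i r ↦ (hYMdist i r).symm.memLp_snd (hXL2 i))
    (fun i r ↦ (hYMdist i r).integral_eq.trans (hE i)) fun i r ↦ (hYMdist i r).variance_eq
  simp only [Fintype.card_fin] at hJ hM
  rw [hJ, hM, div_eq_mul_inv, div_eq_mul_inv, mul_right_inj' (prod_pos fun i _ ↦ hV i).ne',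
    inv_inj]
  norm_cast

/-- If all means are zero and all variances are positive, and the joint
estimator uses `R_J` replications while the marginal estimator uses `R_M` replications,
then `Var(Î_J) = Var(Î_M)` if and only if `R_J = R_M ^ N`. -/
theorem variance_joint_eq_marginal_iff_zero_means
    {Ω : Type*} [MeasurableSpace Ω] (μ : Measure Ω) [IsProbabilityMeasure μ]
    (N RJ RM : ℕ) (hN : 1 ≤ N) (hRJ : 1 ≤ RJ) (hRM : 1 ≤ RM)
    (X : Fin N → Ω → ℝ)
    (hXmeas : ∀ i, Measurable (X i))
    (hXL2 : ∀ i, MemLp (X i) 2 μ)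
    (hXindep : iIndepFun (m := fun _ => Real.measurableSpace) X μ)
    (YJ : Fin N → Fin RJ → Ω → ℝ)
    (hYJmeas : ∀ i r, Measurable (YJ i r))
    (hYJindep : iIndepFun (m := fun _ => Real.measurableSpace)
      (fun p : Fin N × Fin RJ => YJ p.1 p.2) μ)
    (hYJdist : ∀ i r, IdentDistrib (YJ i r) (X i) μ μ)
    (YM : Fin N → Fin RM → Ω → ℝ)
    (hYMmeas : ∀ i r, Measurable (YM i r))
    (hYMindep : iIndepFun (m := fun _ => Real.measurableSpace)
      (fun p : Fin N × Fin RM => YM p.1 p.2) μ)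
    (hYMdist : ∀ i r, IdentDistrib (YM i r) (X i) μ μ)
    (hE : ∀ i, (∫ ω, X i ω ∂μ) = 0)
    (hV : ∀ i, 0 < variance (X i) μ) :
    variance (fun ω => (RJ : ℝ)⁻¹ * ∑ r, ∏ i, YJ i r ω) μ
      = variance (fun ω => ∏ i, ((RM : ℝ)⁻¹ * ∑ r, YM i r ω)) μ
    ↔ RJ = RM ^ N :=
  variance_joint_eq_marginal_iff_zero_means_general μ N RJ RM hN X hXL2 YJ hYJindep hYJdist YM
    hYMindep hYMdist hE hV
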